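/- If x̂ ∈ S is an efficient solution of (P) and both the extended Abadie data qualification (EADQ) and the Maeda objective qualification (MOQ) hold at x̂, then the strong KKT condition holds at x̂. -/

import Mathlib

open Set Filter Topology
open scoped RealInnerProductSpace Pointwise

noncomputable section

namespace MOSIP

variable {n : ℕ} {T : Type*} {p : ℕ}

/-- The decision space `ℝ^n`. -/
abbrev Eucl (n : ℕ) := EuclideanSpace ℝ (Fin n)

/-- Subdifferential of a real-valued function. -/
def subdiff (h : Eucl n → ℝ) (x : Eucl n) : Set (Eucl n) :=
  {ξ | ∀ y, h x + ⟪ξ, y - x⟫ ≤ h y}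

/-- Subdifferential of an extended-real-valued function. -/
def subdiffE (h : Eucl n → EReal) (x : Eucl n) : Set (Eucl n) :=
  {ξ | ∀ y, h x + ((⟪ξ, y - x⟫ : ℝ) : EReal) ≤ h y}

/-- Convexity of an extended-real-valued function. -/
def ConvexE (h : Eucl n → EReal) : Prop :=
  ∀ x y : Eucl n, ∀ a b : ℝ, 0 ≤ a → 0 ≤ b → a + b = 1 →
    h (a • x + b • y) ≤ (a : EReal) * h x + (b : EReal) * h y

/-- Proper (with values in `ℝ ∪ {+∞}`): never `−∞` and not identically `+∞`. -/
def ProperE (h : Eucl n → EReal) : Prop :=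
  (∀ x, h x ≠ ⊥) ∧ (∃ x, h x ≠ ⊤)

/-- Feasible set `S` of the problem `(P)`. -/
def feasSet (g : T → Eucl n → EReal) : Set (Eucl n) := {x | ∀ t, g t x ≤ 0}

/-- Active indices `T(x)`. -/
def activeIx (g : T → Eucl n → EReal) (x : Eucl n) : Set T := {t | g t x = 0}

/-- `ε`-active indices `T_ε(x)`. -/
def activeIxEps (g : T → Eucl n → EReal) (x : Eucl n) (ε : ℝ) : Set T :=
  {t | ((-ε : ℝ) : EReal) ≤ g t x}

/-- `F(xh) = ⋃ i, ∂f_i(xh)`. -/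
def FSet (f : Fin p → Eucl n → ℝ) (x : Eucl n) : Set (Eucl n) := ⋃ i, subdiff (f i) x

/-- `G(xh) = ⋃_{t ∈ T(xh)} ∂g_t(xh)`. -/
def GSet (g : T → Eucl n → EReal) (x : Eucl n) : Set (Eucl n) :=
  ⋃ t ∈ activeIx g x, subdiffE (g t) x

/-- The smallest convex cone containing `M` and `0`: all finite nonnegative combinations. -/
def coneHull (M : Set (Eucl n)) : Set (Eucl n) :=
  {x | ∃ (s : Finset (Eucl n)) (c : Eucl n → ℝ), ↑s ⊆ M ∧ (∀ v ∈ s, 0 ≤ c v) ∧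
    x = ∑ v ∈ s, c v • v}

/-- Negative polar cone `M⁰`. -/
def negPolar (M : Set (Eucl n)) : Set (Eucl n) := {d | ∀ ξ ∈ M, ⟪ξ, d⟫ ≤ 0}

/-- Strictly negative polar cone `M⁻`. -/
def strictNegPolar (M : Set (Eucl n)) : Set (Eucl n) := {d | ∀ ξ ∈ M, ⟪ξ, d⟫ < 0}

/-- Contingent (Bouligand tangent) cone of `M` at `x`. -/
def contingentCone (M : Set (Eucl n)) (x : Eucl n) : Set (Eucl n) :=
  {v | ∃ (τ : ℕ → ℝ) (w : ℕ → Eucl n), (∀ r, 0 < τ r) ∧ Tendsto τ atTop (𝓝 0) ∧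
    Tendsto w atTop (𝓝 v) ∧ ∀ r, x + τ r • w r ∈ M}

/-- Normal cone `N(M, x) := C(M, x)⁰`. -/
def normalCone (M : Set (Eucl n)) (x : Eucl n) : Set (Eucl n) :=
  negPolar (contingentCone M x)

/-- Weak efficient solution. -/
def WeakEff (f : Fin p → Eucl n → ℝ) (S : Set (Eucl n)) (xh : Eucl n) : Prop :=
  ¬ ∃ x ∈ S, ∀ i, f i x < f i xh

/-- Efficient solution. -/
def Eff (f : Fin p → Eucl n → ℝ) (S : Set (Eucl n)) (xh : Eucl n) : Prop :=
  ¬ ∃ x ∈ S, (∀ i, f i x ≤ f i xh) ∧ ∃ j, f j x < f j xh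

/-- Isolated efficient solution with constant `ν`:
`max_i (f_i(x) − f_i(xh)) ≥ ν‖x − xh‖` on `S`. -/
def IsolatedEff (f : Fin p → Eucl n → ℝ) (S : Set (Eucl n)) (xh : Eucl n) (ν : ℝ) : Prop :=
  ∀ x ∈ S, ∃ i, ν * ‖x - xh‖ ≤ f i x - f i xh

/-- `w ∈ Σ α_i ∂f_i(xh) + Σ_{t ∈ T*} β_t ∂g_t(xh)` with multipliers as described,
where `Nonneg`/`Pos` refers to the sign condition on the `α_i`. -/
def KKTPoint (f : Fin p → Eucl n → ℝ) (g : T → Eucl n → EReal) (xh : Eucl n)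
    (w : Eucl n) : Prop :=
  ∃ (α : Fin p → ℝ) (Ts : Finset T) (β : T → ℝ) (ξ : Fin p → Eucl n) (ζ : T → Eucl n),
    (∀ i, 0 ≤ α i) ∧ ∑ i, α i = 1 ∧ (∀ t ∈ Ts, t ∈ activeIx g xh) ∧
    (∀ t ∈ Ts, 0 ≤ β t) ∧ (∀ i, ξ i ∈ subdiff (f i) xh) ∧
    (∀ t ∈ Ts, ζ t ∈ subdiffE (g t) xh) ∧
    ∑ i, α i • ξ i + ∑ t ∈ Ts, β t • ζ t = w

/-- The weak KKT condition at `xh`. -/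
def WeakKKT (f : Fin p → Eucl n → ℝ) (g : T → Eucl n → EReal) (xh : Eucl n) : Prop :=
  KKTPoint f g xh 0

/-- The strong KKT condition at `xh` (all objective multipliers positive). -/
def StrongKKT (f : Fin p → Eucl n → ℝ) (g : T → Eucl n → EReal) (xh : Eucl n) : Prop :=
  ∃ (α : Fin p → ℝ) (Ts : Finset T) (β : T → ℝ) (ξ : Fin p → Eucl n) (ζ : T → Eucl n),
    (∀ i, 0 < α i) ∧ ∑ i, α i = 1 ∧ (∀ t ∈ Ts, t ∈ activeIx g xh) ∧
    (∀ t ∈ Ts, 0 ≤ β t) ∧ (∀ i, ξ i ∈ subdiff (f i) xh) ∧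
    (∀ t ∈ Ts, ζ t ∈ subdiffE (g t) xh) ∧
    ∑ i, α i • ξ i + ∑ t ∈ Ts, β t • ζ t = 0

/-- The perturbed KKT condition at `xh` with constant `ν`. -/
def PerturbedKKT (f : Fin p → Eucl n → ℝ) (g : T → Eucl n → EReal) (xh : Eucl n)
    (ν : ℝ) : Prop :=
  ∀ w : Eucl n, ‖w‖ ≤ ν → KKTPoint f g xh w

/-- The gap function `ϑ(x, ξ, λ) = sup_{y ∈ S} Σ_i λ_i ⟪ξ_i, x − y⟫`. -/
def gapFn (S : Set (Eucl n)) (x : Eucl n) (ξ : Fin p → Eucl n) (lam : Fin p → ℝ) : EReal :=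
  ⨆ y ∈ S, ((∑ i, lam i * ⟪ξ i, x - y⟫ : ℝ) : EReal)

/-- The unit simplex of multipliers. -/
def simplex (lam : Fin p → ℝ) : Prop := (∀ i, 0 ≤ lam i) ∧ ∑ i, lam i = 1

/-- Supremum (marginal) function `ψ(x) = sup_t g_t(x)`. -/
def supFn (g : T → Eucl n → EReal) (x : Eucl n) : EReal := ⨆ t, g t x

/-- Directional derivative of a convex extended-real-valued function,
`h'(x; d) = inf_{τ > 0} (h(x + τ d) − h(x))/τ` (the limit as `τ ↓ 0`). -/
def dirDeriv (h : Eucl n → EReal) (x d : Eucl n) : EReal :=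
  ⨅ τ ∈ Ioi (0 : ℝ), (h (x + τ • d) - h x) * ((τ⁻¹ : ℝ) : EReal)

/-- Every constraint is (real-valued and) continuously differentiable around `xh`,
with gradient `gr t` at `xh`. -/
def SmoothConstraintsAt (g : T → Eucl n → EReal) (gr : T → Eucl n) (xh : Eucl n) : Prop :=
  ∀ t, ∃ (h : Eucl n → ℝ) (U : Set (Eucl n)), U ∈ 𝓝 xh ∧ (∀ y ∈ U, g t y = (h y : EReal)) ∧
    ContDiffOn ℝ 1 h U ∧ gradient h xh = gr t

/-- Slater CQ. -/
def SCQ (g : T → Eucl n → EReal) : Prop := ∃ x₀ : Eucl n, ∀ t, g t x₀ < 0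

/-- Mangasarian–Fromovitz CQ at `xh`. -/
def MFCQ (g : T → Eucl n → EReal) (xh : Eucl n) : Prop :=
  (GSet g xh).Nonempty ∧ (strictNegPolar (GSet g xh)).Nonempty

/-- Perturbed Mangasarian–Fromovitz CQ at `xh`. -/
def PMFCQ (g : T → Eucl n → EReal) (xh : Eucl n) : Prop :=
  ∃ xs : Eucl n,
    (⨅ ε ∈ Ioi (0 : ℝ), ⨆ ξ ∈ ⋃ t ∈ activeIxEps g xh ε, subdiffE (g t) xh,
      ((⟪ξ, xs⟫ : ℝ) : EReal)) < 0

/-- Local Farkas–Minkowski CQ at `xh`. -/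
def LFMCQ (g : T → Eucl n → EReal) (xh : Eucl n) : Prop :=
  normalCone (feasSet g) xh = coneHull (GSet g xh)

/-- Closed cone CQ at `xh`. -/
def CCCQ (g : T → Eucl n → EReal) (xh : Eucl n) : Prop :=
  IsClosed (coneHull (GSet g xh))

/-- Abadie CQ at `xh`. -/
def ACQ (g : T → Eucl n → EReal) (xh : Eucl n) : Prop :=
  (GSet g xh).Nonempty ∧ negPolar (GSet g xh) ⊆ contingentCone (feasSet g) xh

/-- Kuhn–Tucker CQ at `xh`. -/
def KTCQ (g : T → Eucl n → EReal) (xh : Eucl n) : Prop :=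
  {d | dirDeriv (supFn g) xh d ≤ 0} ⊆ contingentCone (feasSet g) xh

/-- Pshenichnyi–Levin–Valadier CQ at `xh`. -/
def PLVCQ (g : T → Eucl n → EReal) (xh : Eucl n) : Prop :=
  subdiffE (supFn g) xh ⊆ coneHull (GSet g xh)

/-- Weak Abadie DQ at `xh`. -/
def WADQ (f : Fin p → Eucl n → ℝ) (g : T → Eucl n → EReal) (xh : Eucl n) : Prop :=
  (GSet g xh).Nonempty ∧
    strictNegPolar (FSet f xh) ∩ negPolar (GSet g xh) ⊆ contingentCone (feasSet g) xh

/-- The sublevel sets `Q^i(xh)`. -/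
def QSet (f : Fin p → Eucl n → ℝ) (S : Set (Eucl n)) (xh : Eucl n) (i : Fin p) :
    Set (Eucl n) :=
  {x ∈ S | ∀ l, l ≠ i → f l x ≤ f l xh}

/-- Extended Abadie DQ at `xh`. -/
def EADQ (f : Fin p → Eucl n → ℝ) (g : T → Eucl n → EReal) (xh : Eucl n) : Prop :=
  (GSet g xh).Nonempty ∧
    negPolar (FSet f xh) ∩ negPolar (GSet g xh) ⊆
      ⋂ i, contingentCone (QSet f (feasSet g) xh i) xh

/-- Maeda objective qualification at `xh`. -/
def MOQ (f : Fin p → Eucl n → ℝ) (xh : Eucl n) : Prop :=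
  negPolar (FSet f xh) ⊆ {0} ∪ ⋃ i, strictNegPolar (subdiff (f i) xh)


/-!
Efficiency, EADQ and MOQ together force `F(x̂)⁰ ∩ G(x̂)⁰ = {0}`. Indeed, MOQ puts a nonzero `d`
of this intersection into `∂f_i(x̂)⁻` for some `i`, and EADQ puts it into the contingent cone of
`Q^i(x̂)`, on which `x̂` minimizes `f_i` by efficiency; so the directional derivative `f_i'(x̂; d)`
is nonnegative, whereas the max formula `f_i'(x̂; d) = max_{ξ ∈ ∂f_i(x̂)} ⟪ξ, d⟫` makes it
negative. Hence the convex cone generated by `F(x̂) ∪ G(x̂)` has trivial polar and is all of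
`ℝⁿ`; in particular it contains `-∑ ξ_i` for some `ξ_i ∈ ∂f_i(x̂)`. Grouping that conic
combination by index (the subdifferentials are convex) and normalizing gives multipliers with
every `α_i` positive.
-/
lemma convex_subdiff (h : Eucl n → ℝ) (x : Eucl n) : Convex ℝ (subdiff h x) := by
  have hrepr : subdiff h x = ⋂ y, innerₗ (Eucl n) (y - x) ⁻¹' Iic (h y - h x) := by
    ext ξ
    simp only [subdiff, mem_iInter, mem_preimage, mem_Iic, innerₗ_apply_apply, real_inner_comm ξ,
      le_sub_iff_add_le']
    rfl
  rw [hrepr]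
  exact convex_iInter fun y => (convex_Iic _).linear_preimage _

lemma convex_subdiffE (h : Eucl n → EReal) (x : Eucl n) : Convex ℝ (subdiffE h x) := by
  have hrepr : subdiffE h x = ⋂ y, innerₗ (Eucl n) (y - x) ⁻¹' {s : ℝ | h x + s ≤ h y} := by
    ext ξ
    simp only [subdiffE, mem_iInter, mem_preimage, innerₗ_apply_apply, real_inner_comm ξ]
    rfl
  have hlower : ∀ y, IsLowerSet {s : ℝ | h x + s ≤ h y} := fun y a b hba ha =>
    le_trans (add_le_add_right (EReal.coe_le_coe_iff.mpr hba) _) ha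
  rw [hrepr]
  exact convex_iInter fun y => (hlower y).ordConnected.convex.linear_preimage _

section RightDirDeriv

variable {E : Type*} [AddCommGroup E] [Module ℝ E] {f : E → ℝ}

def rightDirDeriv (f : E → ℝ) (x v : E) : ℝ :=
  derivWithin (fun t : ℝ => f (x + t • v)) (Ioi 0) 0

lemma _root_.ConvexOn.comp_line (hf : ConvexOn ℝ univ f) (x v : E) :
    ConvexOn ℝ univ (fun t : ℝ => f (x + t • v)) := by
  have hline : (fun t : ℝ => f (x + t • v)) = f ∘ AffineMap.lineMap x (x + v) := by
    ext t
    simp [AffineMap.lineMap_apply, add_comm]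
  simpa [hline] using hf.comp_affineMap (AffineMap.lineMap x (x + v))

lemma _root_.ConvexOn.hasDerivWithinAt_rightDirDeriv (hf : ConvexOn ℝ univ f) (x v : E) :
    HasDerivWithinAt (fun t : ℝ => f (x + t • v)) (rightDirDeriv f x v) (Ioi 0) 0 :=
  (hf.comp_line x v).hasDerivWithinAt_rightDeriv_of_mem_interior (by simp)

lemma _root_.ConvexOn.rightDirDeriv_le (hf : ConvexOn ℝ univ f) (x v : E) {t : ℝ} (ht : 0 < t) :
    rightDirDeriv f x v ≤ (f (x + t • v) - f x) / t := by
  have h := (hf.comp_line x v).rightDeriv_le_slope_of_mem_interior (x := 0) (y := t)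
    (by simp) (mem_univ t) ht
  simpa [rightDirDeriv, slope_def_field] using h

lemma rightDirDeriv_zero (f : E → ℝ) (x : E) : rightDirDeriv f x 0 = 0 := by
  simp [rightDirDeriv]

lemma rightDirDeriv_smul (f : E → ℝ) (x v : E) {c : ℝ} (hc : 0 < c) :
    rightDirDeriv f x (c • v) = c * rightDirDeriv f x v := by
  have h := derivWithin_comp_mul_left c (fun t : ℝ => f (x + t • v)) (Ioi 0) 0
  rw [LinearOrderedField.smul_Ioi hc, mul_zero] at h
  simpa [rightDirDeriv, smul_smul, mul_comm] using h

lemma _root_.ConvexOn.neg_rightDirDeriv_neg_le (hf : ConvexOn ℝ univ f) (x v : E) :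
    -rightDirDeriv f x (-v) ≤ rightDirDeriv f x v := by
  have h := (hf.comp_line x v).leftDeriv_le_rightDeriv_of_mem_interior (x := 0) (by simp)
  have hneg := derivWithin_comp_neg (fun t : ℝ => f (x + t • v)) (Ioi 0) 0
  simp only [neg_smul, ← smul_neg, neg_zero, neg_Ioi] at hneg
  rw [rightDirDeriv, hneg, neg_neg]
  exact h

lemma _root_.ConvexOn.tendsto_rightDirDeriv (hf : ConvexOn ℝ univ f) (x v : E) :
    Tendsto (fun t : ℝ => (f (x + t • v) - f x) / t) (𝓝[>] 0) (𝓝 (rightDirDeriv f x v)) := by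
  have h := hasDerivWithinAt_iff_tendsto_slope.mp (hf.hasDerivWithinAt_rightDirDeriv x v)
  rw [sdiff_singleton_eq_self self_notMem_Ioi] at h
  simpa [slope_fun_def_field] using h

lemma _root_.ConvexOn.rightDirDeriv_add_le (hf : ConvexOn ℝ univ f) (x u v : E) :
    rightDirDeriv f x (u + v) ≤ rightDirDeriv f x u + rightDirDeriv f x v := by
  have hmid : ∀ t > 0, (f (x + t • ((1 / 2 : ℝ) • u + (1 / 2 : ℝ) • v)) - f x) / t ≤
      1 / 2 * ((f (x + t • u) - f x) / t) + 1 / 2 * ((f (x + t • v) - f x) / t) := by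
    intro t ht
    have h := hf.2 (mem_univ (x + t • u)) (mem_univ (x + t • v))
      (by norm_num : (0 : ℝ) ≤ 1 / 2) (by norm_num : (0 : ℝ) ≤ 1 / 2) (by norm_num)
    rw [show (1 / 2 : ℝ) • (x + t • u) + (1 / 2 : ℝ) • (x + t • v) =
      x + t • ((1 / 2 : ℝ) • u + (1 / 2 : ℝ) • v) by module, smul_eq_mul, smul_eq_mul] at h
    refine (div_le_div_of_nonneg_right (sub_le_sub_right h (f x)) ht.le).trans_eq ?_
    ring
  have hle := le_of_tendsto_of_tendsto (hf.tendsto_rightDirDeriv x _)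
    (((hf.tendsto_rightDirDeriv x u).const_mul (1 / 2)).add
      ((hf.tendsto_rightDirDeriv x v).const_mul (1 / 2)))
    (eventually_nhdsWithin_of_forall hmid)
  have hhalf : u + v = (2 : ℝ) • ((1 / 2 : ℝ) • u + (1 / 2 : ℝ) • v) := by module
  rw [hhalf, rightDirDeriv_smul f x _ two_pos]
  linarith

end RightDirDeriv

lemma exists_mem_subdiff_inner_eq {f : Eucl n → ℝ} (hf : ConvexOn ℝ univ f) (x d : Eucl n) :
    ∃ ξ ∈ subdiff f x, ⟪ξ, d⟫ = rightDirDeriv f x d := by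
  have hd : ∀ c : ℝ, c • d = 0 → c • rightDirDeriv f x d = 0 := by
    intro c hc
    rcases smul_eq_zero.mp hc with rfl | rfl
    · exact zero_smul _ _
    · rw [rightDirDeriv_zero, smul_zero]
  set φ := LinearPMap.mkSpanSingleton' (σ := RingHom.id ℝ) d (rightDirDeriv f x d) hd
  have hφ : ∀ z : φ.domain, φ z ≤ rightDirDeriv f x z := by
    rintro ⟨z, hz⟩
    obtain ⟨c, rfl⟩ := Submodule.mem_span_singleton.mp hz
    rw [LinearPMap.mkSpanSingleton'_apply, RingHom.id_apply, smul_eq_mul]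
    change c * rightDirDeriv f x d ≤ rightDirDeriv f x (c • d)
    rcases lt_trichotomy c 0 with hc | rfl | hc
    · have h := hf.neg_rightDirDeriv_neg_le x d
      rw [show c • d = (-c) • -d by module, rightDirDeriv_smul f x _ (neg_pos.mpr hc)]
      nlinarith
    · simp [rightDirDeriv_zero]
    · rw [rightDirDeriv_smul f x d hc]
  obtain ⟨L, hLφ, hL⟩ := exists_extension_of_le_sublinear φ (rightDirDeriv f x)
    (fun c hc v => rightDirDeriv_smul f x v hc) (hf.rightDirDeriv_add_le x) hφ
  set ξ := (InnerProductSpace.toDual ℝ (Eucl n)).symm (LinearMap.toContinuousLinearMap L)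
  have hξ : ∀ y, ⟪ξ, y⟫ = L y := by
    intro y
    simp [ξ, InnerProductSpace.toDual_symm_apply]
  refine ⟨ξ, fun y => ?_, ?_⟩
  · have h := (hL (y - x)).trans (hf.rightDirDeriv_le x (y - x) one_pos)
    rw [hξ]
    simp only [one_smul, add_sub_cancel, div_one] at h
    linarith
  · rw [hξ, hLφ ⟨d, by simp [φ, LinearPMap.domain_mkSpanSingleton]⟩]
    exact LinearPMap.mkSpanSingleton'_apply_self _ _ _ _

lemma nonempty_subdiff {f : Eucl n → ℝ} (hf : ConvexOn ℝ univ f) (x : Eucl n) :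
    (subdiff f x).Nonempty :=
  let ⟨ξ, hξ, _⟩ := exists_mem_subdiff_inner_eq hf x 0
  ⟨ξ, hξ⟩

lemma rightDirDeriv_nonneg_of_isMinOn {f : Eucl n → ℝ} (hf : ConvexOn ℝ univ f)
    {Q : Set (Eucl n)} {x d : Eucl n} (hmin : IsMinOn f Q x) (hd : d ∈ contingentCone Q x) :
    0 ≤ rightDirDeriv f x d := by
  -- A descent step `f (x + t₀ • d) < f x` persists for the nearby `w r`, and convexity along the
  -- segment carries it to the feasible points `x + τ r • w r` once `τ r < t₀`.
  by_contra! hneg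
  have hslope : ∀ᶠ t in 𝓝[>] 0, (f (x + t • d) - f x) / t < 0 :=
    (hf.tendsto_rightDirDeriv x d).eventually (gt_mem_nhds hneg)
  obtain ⟨t₀, ht₀, ht₀pos⟩ := (hslope.and self_mem_nhdsWithin).exists
  obtain ⟨τ, w, hτ, hτ0, hw, hmem⟩ := hd
  have hcont : Continuous f := continuousOn_univ.mp (hf.continuousOn isOpen_univ)
  have hdesc : ∀ᶠ r in atTop, f (x + t₀ • w r) < f x := by
    have hlim : Tendsto (fun r => f (x + t₀ • w r)) atTop (𝓝 (f (x + t₀ • d))) :=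
      ((hcont.comp (continuous_const.add (continuous_const_smul t₀))).tendsto d).comp hw
    refine hlim.eventually (gt_mem_nhds ?_)
    have := (div_lt_iff₀ ht₀pos).mp ht₀
    linarith
  obtain ⟨r, hr, hrτ⟩ := (hdesc.and (hτ0.eventually (gt_mem_nhds ht₀pos))).exists
  have hsec := (hf.comp_line x (w r)).secant_mono (a := 0) (mem_univ _) (mem_univ _) (mem_univ _)
    (hτ r).ne' ht₀pos.ne' hrτ.le
  simp only [zero_smul, add_zero, sub_zero] at hsec
  have hdrop := (div_lt_iff₀ (hτ r)).mp
    (hsec.trans_lt (div_neg_of_neg_of_pos (sub_neg.mpr hr) ht₀pos))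
  have hle := isMinOn_iff.mp hmin _ (hmem r)
  linarith

section ConeHull

variable {E : Type*} [AddCommGroup E] [Module ℝ E]

lemma pointedConeHull_subset_insert_zero_convexConeHull (C : Set E) :
    (PointedCone.hull ℝ C : Set E) ⊆ insert 0 (ConvexCone.hull ℝ C : Set E) := by
  intro x hx
  induction hx using Submodule.span_induction with
  | mem y hy => exact Or.inr (ConvexCone.subset_hull hy)
  | zero => exact Or.inl rfl
  | add y z _ _ hy hz =>
    rcases hy with rfl | hy
    · simpa using hz
    rcases hz with rfl | hz
    · simpa using Or.inr hy
    exact Or.inr ((ConvexCone.hull ℝ C).add_mem hy hz)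
  | smul c y _ hy =>
    rcases hy with rfl | hy
    · simp
    rcases c.2.eq_or_lt with hc | hc
    · left
      simp [show c = 0 from Subtype.ext hc.symm]
    · exact Or.inr ((ConvexCone.hull ℝ C).smul_mem hc hy)

lemma exists_finset_sum_smul_eq_of_mem_hull_iUnion {ι : Type*} {C : ι → Set E}
    (hC : ∀ i, Convex ℝ (C i)) {x : E} (hx : x ∈ PointedCone.hull ℝ (⋃ i, C i)) :
    ∃ (I : Finset ι) (w : ι → ℝ) (η : ι → E),
      (∀ i ∈ I, 0 ≤ w i ∧ η i ∈ C i) ∧ ∑ i ∈ I, w i • η i = x := by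
  classical
  rw [PointedCone.hull, Submodule.span_iUnion, Submodule.mem_iSup_iff_exists_finset] at hx
  obtain ⟨s, hs⟩ := hx
  obtain ⟨μ, rfl⟩ := (Submodule.mem_iSup_finset_iff_exists_sum _ _).mp hs
  have hrep : ∀ i, ∃ (r : ℝ) (y : E), 0 ≤ r ∧ ((μ i : E) ≠ 0 → y ∈ C i) ∧ r • y = μ i := by
    intro i
    by_cases h : (μ i : E) = 0
    · exact ⟨0, 0, le_rfl, fun h' => (h' h).elim, by simp [h]⟩
    · obtain ⟨r, hr, hmem⟩ := (ConvexCone.mem_hull_of_convex (hC i)).mp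
        ((pointedConeHull_subset_insert_zero_convexConeHull _ (μ i).2).resolve_left h)
      obtain ⟨y, hy, hry⟩ := mem_smul_set.mp hmem
      exact ⟨r, y, hr.le, fun _ => hy, hry⟩
  choose w η hw hη hwη using hrep
  refine ⟨s.filter (fun i => (μ i : E) ≠ 0), w, η,
    fun i hi => ⟨hw i, hη i (Finset.mem_filter.mp hi).2⟩, ?_⟩
  rw [Finset.sum_congr rfl (fun i _ => hwη i), Finset.sum_filter_ne_zero]

lemma exists_sum_smul_eq_sum_add_finset_sum {ι : Type*} [Fintype ι] {C : ι → Set E}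
    (hC : ∀ i, Convex ℝ (C i)) {ξ : ι → E} (hξ : ∀ i, ξ i ∈ C i) (I : Finset ι)
    {w : ι → ℝ} {η : ι → E} (hwη : ∀ i ∈ I, 0 ≤ w i ∧ η i ∈ C i) :
    ∃ (α : ι → ℝ) (μ : ι → E), (∀ i, 0 < α i) ∧ (∀ i, μ i ∈ C i) ∧
      ∑ i, α i • μ i = ∑ i, ξ i + ∑ i ∈ I, w i • η i := by
  classical
  have hmerge : ∀ i, ∃ (a : ℝ) (μ : E), 0 < a ∧ μ ∈ C i ∧
      a • μ = ξ i + if i ∈ I then w i • η i else 0 := by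
    intro i
    by_cases hi : i ∈ I
    · obtain ⟨hw, hη⟩ := hwη i hi
      have hmem : ξ i + w i • η i ∈ (1 + w i) • C i := by
        rw [(hC i).add_smul zero_le_one hw, one_smul]
        exact add_mem_add (hξ i) (smul_mem_smul_set hη)
      obtain ⟨μ, hμ, hμeq⟩ := mem_smul_set.mp hmem
      exact ⟨1 + w i, μ, by linarith, hμ, by rw [hμeq, if_pos hi]⟩
    · exact ⟨1, ξ i, one_pos, hξ i, by rw [if_neg hi, one_smul, add_zero]⟩
  choose α μ hα hμ hαμ using hmerge
  refine ⟨α, μ, hα, hμ, ?_⟩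
  simp [hαμ, Finset.sum_add_distrib, Finset.sum_ite_mem]

end ConeHull

lemma _root_.Convex.eq_univ_of_dense {E : Type*} [NormedAddCommGroup E] [NormedSpace ℝ E]
    [FiniteDimensional ℝ E] {s : Set E} (hs : Convex ℝ s) (hd : Dense s) : s = univ := by
  have hspan : affineSpan ℝ s = ⊤ := by
    refine AffineSubspace.coe_eq_univ_iff _ |>.mp (eq_univ_of_univ_subset ?_)
    rw [← hd.closure_eq]
    exact closure_minimal (subset_affineSpan ℝ s) (affineSpan ℝ s).closed_of_finiteDimensional
  have hint := hs.interior_closure_eq_interior_of_nonempty_interior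
    (hs.interior_nonempty_iff_affineSpan_eq_top.mpr hspan)
  rw [hd.closure_eq, interior_univ] at hint
  exact eq_univ_of_univ_subset (hint ▸ interior_subset)

lemma hull_eq_top_of_negPolar_subset_zero {M : Set (Eucl n)} (hM : negPolar M ⊆ {0}) :
    PointedCone.hull ℝ M = ⊤ := by
  have hdense : Dense (PointedCone.hull ℝ M : Set (Eucl n)) := by
    refine dense_iff_closure_eq.mpr (eq_univ_of_forall fun z => ?_)
    by_contra hz
    let K : ProperCone ℝ (Eucl n) := Submodule.closure (PointedCone.hull ℝ M)
    obtain ⟨y, hy, hzy⟩ := K.hyperplane_separation' (x₀ := z) hz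
    have hy0 : -y ∈ negPolar M := fun ξ hξ => by
      have := hy ξ (subset_closure (PointedCone.subset_hull hξ))
      rw [inner_neg_right]
      linarith
    have : y = 0 := neg_eq_zero.mp (hM hy0)
    simp [this] at hzy
  exact SetLike.coe_injective ((PointedCone.hull ℝ M).convex.eq_univ_of_dense hdense)

lemma Eff.isMinOn_qSet {f : Fin p → Eucl n → ℝ} {S : Set (Eucl n)} {xh : Eucl n}
    (heff : Eff f S xh) (i : Fin p) : IsMinOn (f i) (QSet f S xh i) xh := by
  refine isMinOn_iff.mpr fun y hy => not_lt.mp fun hlt => heff ⟨y, hy.1, fun l => ?_, i, hlt⟩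
  by_cases hl : l = i
  · exact hl ▸ hlt.le
  · exact hy.2 l hl

lemma negPolar_union_subset_zero {f : Fin p → Eucl n → ℝ} {g : T → Eucl n → EReal} {xh : Eucl n}
    (hf : ∀ i, ConvexOn ℝ univ (f i)) (heff : Eff f (feasSet g) xh) (headq : EADQ f g xh)
    (hmoq : MOQ f xh) : negPolar (FSet f xh ∪ GSet g xh) ⊆ {0} := by
  intro d hd
  have hdF : d ∈ negPolar (FSet f xh) := fun ξ hξ => hd ξ (Or.inl hξ)
  have hdG : d ∈ negPolar (GSet g xh) := fun ξ hξ => hd ξ (Or.inr hξ)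
  refine (hmoq hdF).resolve_right fun hstrict => ?_
  obtain ⟨i, hi⟩ := mem_iUnion.mp hstrict
  obtain ⟨ξ, hξ, hξd⟩ := exists_mem_subdiff_inner_eq (hf i) xh d
  have hnonneg := rightDirDeriv_nonneg_of_isMinOn (hf i) (heff.isMinOn_qSet i)
    (mem_iInter.mp (headq.2 ⟨hdF, hdG⟩) i)
  linarith [hi ξ hξ]

lemma strongKKT_of_sum_smul_eq_zero {f : Fin p → Eucl n → ℝ} {g : T → Eucl n → EReal}
    {xh : Eucl n} (hp : 1 ≤ p) {α : Fin p → ℝ} {μ : Fin p → Eucl n} {Ts : Finset T}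
    {β : T → ℝ} {ζ : T → Eucl n} (hα : ∀ i, 0 < α i) (hμ : ∀ i, μ i ∈ subdiff (f i) xh)
    (hTs : ∀ t ∈ Ts, t ∈ activeIx g xh) (hβ : ∀ t ∈ Ts, 0 ≤ β t)
    (hζ : ∀ t ∈ Ts, ζ t ∈ subdiffE (g t) xh)
    (hsum : ∑ i, α i • μ i + ∑ t ∈ Ts, β t • ζ t = 0) : StrongKKT f g xh := by
  have hσ : 0 < ∑ i, α i := Finset.sum_pos (fun i _ => hα i) ⟨⟨0, hp⟩, Finset.mem_univ _⟩
  refine ⟨fun i => α i / ∑ j, α j, Ts, fun t => β t / ∑ j, α j, μ, ζ,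
    fun i => div_pos (hα i) hσ, by rw [← Finset.sum_div, div_self hσ.ne'], hTs,
    fun t ht => div_nonneg (hβ t ht) hσ.le, hμ, hζ, ?_⟩
  simp_rw [div_eq_inv_mul, mul_smul, ← Finset.smul_sum, ← smul_add, hsum, smul_zero]

variable {n p : ℕ} {T : Type*}

theorem stmt7_general
    (hp : 1 ≤ p)
    (f : Fin p → Eucl n → ℝ) (g : T → Eucl n → EReal)
    (hf : ∀ i, ConvexOn ℝ Set.univ (f i))
    (xh : Eucl n)
    (heff : Eff f (feasSet g) xh)
    (headq : EADQ f g xh) (hmoq : MOQ f xh) :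
    StrongKKT f g xh := by
  choose ξ hξ using fun i => nonempty_subdiff (hf i) xh
  have hcone : -∑ i, ξ i ∈ PointedCone.hull ℝ (FSet f xh ∪ GSet g xh) := by
    rw [hull_eq_top_of_negPolar_subset_zero (negPolar_union_subset_zero hf heff headq hmoq)]
    trivial
  obtain ⟨a, ha, b, hb, hab⟩ := Submodule.mem_sup.mp ((Submodule.span_union _ _).le hcone)
  obtain ⟨I, w, η, hwη, rfl⟩ :=
    exists_finset_sum_smul_eq_of_mem_hull_iUnion (fun i => convex_subdiff (f i) xh) ha
  obtain ⟨Ts, β, ζ, hβζ, rfl⟩ := exists_finset_sum_smul_eq_of_mem_hull_iUnion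
    -- `⋃ t, C t` is `GSet g xh` by definition
    (C := fun t => ⋃ (_ : t ∈ activeIx g xh), subdiffE (g t) xh)
    (fun t => by by_cases ht : t ∈ activeIx g xh <;> simp [ht, convex_subdiffE, convex_empty]) hb
  obtain ⟨α, μ, hα, hμ, hαμ⟩ :=
    exists_sum_smul_eq_sum_add_finset_sum (fun i => convex_subdiff (f i) xh) hξ I hwη
  have hζ : ∀ t ∈ Ts, t ∈ activeIx g xh ∧ ζ t ∈ subdiffE (g t) xh := fun t ht => by
    simpa using (hβζ t ht).2
  refine strongKKT_of_sum_smul_eq_zero hp hα hμ (fun t ht => (hζ t ht).1)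
    (fun t ht => (hβζ t ht).1) (fun t ht => (hζ t ht).2) ?_
  rw [hαμ, add_assoc, hab, add_neg_cancel]

/-- If `x̂ ∈ S` is an efficient solution of `(P)` and both EADQ and MOQ hold
at `x̂`, then the strong KKT condition holds at `x̂`. -/
theorem stmt7
    (hn : 1 ≤ n) (hp : 1 ≤ p)
    (f : Fin p → Eucl n → ℝ) (g : T → Eucl n → EReal)
    (hf : ∀ i, ConvexOn ℝ Set.univ (f i))
    (hgconv : ∀ t, ConvexE (g t))
    (hgproper : ∀ t, ProperE (g t))
    (hglsc : ∀ t, LowerSemicontinuous (g t))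
    (xh : Eucl n) (hxS : xh ∈ feasSet g)
    (heff : Eff f (feasSet g) xh)
    (headq : EADQ f g xh) (hmoq : MOQ f xh) :
    StrongKKT f g xh :=
  stmt7_general hp f g hf xh heff headq hmoq

end MOSIP
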